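/- Let g be in Monge form g(u,v) = (u,v,f(u,v)) with f = (1/2)(k₁u² + k₂v²) + Σ_{i+j≥3}(a_{ij}/(i!j!))u^iv^j and k₁ ≠ k₂. Then the principal curvature κ₁ (the one equal to k₁ at the origin, with principal direction (1,0)) has 2-jet at the origin: κ₁(u,v) = k₁ + a₃₀u + a₂₁v + (1/(2(k₁−k₂)))·{ [2a₂₁² + (a₄₀ − 3k₁³)(k₁−k₂)]u² + 2[2a₂₁a₁₂ + a₃₁(k₁−k₂)]uv + [2a₁₂² + (a₂₂ − k₁k₂²)(k₁−k₂)]v² } + O(u,v)³. -/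

import Mathlib

noncomputable section

/-- Partial derivative in the first variable. -/
def pdu (f : ℝ × ℝ → ℝ) (p : ℝ × ℝ) : ℝ := fderiv ℝ f p (1, 0)

/-- Partial derivative in the second variable. -/
def pdv (f : ℝ × ℝ → ℝ) (p : ℝ × ℝ) : ℝ := fderiv ℝ f p (0, 1)

/-- Coefficient `E` of the first fundamental form of the Monge surface `(u,v,f(u,v))`. -/
def Ee (f : ℝ × ℝ → ℝ) (p : ℝ × ℝ) : ℝ := 1 + (pdu f p) ^ 2

/-- Coefficient `F` of the first fundamental form. -/
def Ff (f : ℝ × ℝ → ℝ) (p : ℝ × ℝ) : ℝ := pdu f p * pdv f p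

/-- Coefficient `G` of the first fundamental form. -/
def Gg (f : ℝ × ℝ → ℝ) (p : ℝ × ℝ) : ℝ := 1 + (pdv f p) ^ 2

/-- Coefficient `L` of the second fundamental form. -/
def Ll (f : ℝ × ℝ → ℝ) (p : ℝ × ℝ) : ℝ :=
  pdu (pdu f) p / Real.sqrt (1 + (pdu f p) ^ 2 + (pdv f p) ^ 2)

/-- Coefficient `M` of the second fundamental form. -/
def Mm (f : ℝ × ℝ → ℝ) (p : ℝ × ℝ) : ℝ :=
  pdv (pdu f) p / Real.sqrt (1 + (pdu f p) ^ 2 + (pdv f p) ^ 2)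

/-- Coefficient `N` of the second fundamental form. -/
def Nn (f : ℝ × ℝ → ℝ) (p : ℝ × ℝ) : ℝ :=
  pdv (pdv f) p / Real.sqrt (1 + (pdu f p) ^ 2 + (pdv f p) ^ 2)

/-- `κ p` is a principal curvature of the Monge surface `(u,v,f(u,v))` at `p`:
it is a root of the characteristic equation
`(EG-F²)κ² - (EN-2FM+GL)κ + (LN-M²) = 0`. -/
def IsPrincipalCurvature (f : ℝ × ℝ → ℝ) (κ : ℝ × ℝ → ℝ) (p : ℝ × ℝ) : Prop :=
  (Ee f p * Gg f p - Ff f p ^ 2) * κ p ^ 2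
    - (Ee f p * Nn f p - 2 * Ff f p * Mm f p + Gg f p * Ll f p) * κ p
    + (Ll f p * Nn f p - Mm f p ^ 2) = 0

/-!
Taking 2-jets at a point (value and partial derivatives up to order two) of `C²` functions of
`(u, v)` is compatible with sums and products, the product of jets being given by the Leibniz
rule, and jets only depend on germs. Clearing denominators, the characteristic equation becomes
`S² κ² - W B κ + C = 0` with `S = EG - F²`, `W = √S`, `B = W (EN - 2FM + GL)` and
`C = W² (LN - M²)`, which are polynomial in the partial derivatives of `f` except for `W`, whose
jet follows from `W² = S`. At the origin the 2-jet of this equation consists of six scalar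
equations: the unknown derivatives of `κ` enter linearly, with coefficient
`2 κ(0) - (k₁ + k₂) = k₁ - k₂ ≠ 0`, and lower-order ones are already known when a higher one
is solved for.
-/

open Filter Topology
open scoped ContDiff

section DirectionalDerivatives

variable {E : Type*} [NormedAddCommGroup E] [NormedSpace ℝ E] {g h : E → ℝ} {x : E}
  {n : WithTop ℕ∞}

theorem ContDiffAt.eventually_differentiableAt (hg : ContDiffAt ℝ n g x) (hn : 1 ≤ n) :
    ∀ᶠ p in 𝓝 x, DifferentiableAt ℝ g p :=
  ((hg.of_le hn).eventually (by simp)).mono fun _ hp => hp.differentiableAt one_ne_zero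

theorem ContDiffAt.differentiableAt_fderiv_apply (hg : ContDiffAt ℝ n g x) (hn : 2 ≤ n) (w : E) :
    DifferentiableAt ℝ (fun p => fderiv ℝ g p w) x :=
  ((hg.fderiv_right (m := 1) hn).clm_apply contDiffAt_const).differentiableAt one_ne_zero

theorem fderiv_fderiv_add_apply (hg : ContDiffAt ℝ 2 g x) (hh : ContDiffAt ℝ 2 h x) (w z : E) :
    fderiv ℝ (fun p => fderiv ℝ (fun q => g q + h q) p w) x z
      = fderiv ℝ (fun p => fderiv ℝ g p w) x z + fderiv ℝ (fun p => fderiv ℝ h p w) x z := by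
  have e : (fun p => fderiv ℝ (fun q => g q + h q) p w)
      =ᶠ[𝓝 x] fun p => fderiv ℝ g p w + fderiv ℝ h p w := by
    filter_upwards [hg.eventually_differentiableAt one_le_two,
      hh.eventually_differentiableAt one_le_two] with p hgp hhp
    rw [fderiv_fun_add hgp hhp, add_apply]
  rw [e.fderiv_eq, fderiv_fun_add (hg.differentiableAt_fderiv_apply le_rfl w)
    (hh.differentiableAt_fderiv_apply le_rfl w), add_apply]

theorem fderiv_fderiv_mul_apply (hg : ContDiffAt ℝ 2 g x) (hh : ContDiffAt ℝ 2 h x) (w z : E) :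
    fderiv ℝ (fun p => fderiv ℝ (fun q => g q * h q) p w) x z
      = fderiv ℝ (fun p => fderiv ℝ g p w) x z * h x + fderiv ℝ g x w * fderiv ℝ h x z
        + fderiv ℝ g x z * fderiv ℝ h x w + g x * fderiv ℝ (fun p => fderiv ℝ h p w) x z := by
  have dg := hg.differentiableAt two_ne_zero
  have dh := hh.differentiableAt two_ne_zero
  have e : (fun p => fderiv ℝ (fun q => g q * h q) p w)
      =ᶠ[𝓝 x] fun p => fderiv ℝ g p w * h p + g p * fderiv ℝ h p w := by
    filter_upwards [hg.eventually_differentiableAt one_le_two,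
      hh.eventually_differentiableAt one_le_two] with p hgp hhp
    rw [fderiv_fun_mul hgp hhp]
    simp only [add_apply, smul_apply, smul_eq_mul]
    ring
  rw [e.fderiv_eq, fderiv_fun_add, fderiv_fun_mul, fderiv_fun_mul]
  · simp only [add_apply, smul_apply, smul_eq_mul]
    ring
  all_goals fun_prop

end DirectionalDerivatives

/-- Coordinates on `ℝ[u,v]/(u,v)³` given by the Taylor data
`(g, ∂ᵤg, ∂ᵥg, ∂ᵤ²g, ∂ᵥ∂ᵤg, ∂ᵥ²g)`, i.e. with the factorials of the Taylor coefficients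
absorbed; the multiplication below is the Leibniz rule in these coordinates. -/
@[ext]
structure Jet2 where
  val : ℝ
  du : ℝ
  dv : ℝ
  duu : ℝ
  duv : ℝ
  dvv : ℝ

namespace Jet2

def const (c : ℝ) : Jet2 := ⟨c, 0, 0, 0, 0, 0⟩

instance : Add Jet2 :=
  ⟨fun a b => ⟨a.val + b.val, a.du + b.du, a.dv + b.dv, a.duu + b.duu, a.duv + b.duv,
    a.dvv + b.dvv⟩⟩

instance : Sub Jet2 :=
  ⟨fun a b => ⟨a.val - b.val, a.du - b.du, a.dv - b.dv, a.duu - b.duu, a.duv - b.duv,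
    a.dvv - b.dvv⟩⟩

instance : Mul Jet2 :=
  ⟨fun a b => ⟨a.val * b.val, a.du * b.val + a.val * b.du, a.dv * b.val + a.val * b.dv,
    a.duu * b.val + 2 * a.du * b.du + a.val * b.duu,
    a.duv * b.val + a.du * b.dv + a.dv * b.du + a.val * b.duv,
    a.dvv * b.val + 2 * a.dv * b.dv + a.val * b.dvv⟩⟩

variable (a₀ a₁ a₂ a₃ a₄ a₅ b₀ b₁ b₂ b₃ b₄ b₅ : ℝ)

theorem const_eq (c : ℝ) : const c = ⟨c, 0, 0, 0, 0, 0⟩ := rfl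

theorem mk_add_mk : mk a₀ a₁ a₂ a₃ a₄ a₅ + mk b₀ b₁ b₂ b₃ b₄ b₅
    = ⟨a₀ + b₀, a₁ + b₁, a₂ + b₂, a₃ + b₃, a₄ + b₄, a₅ + b₅⟩ := rfl

theorem mk_sub_mk : mk a₀ a₁ a₂ a₃ a₄ a₅ - mk b₀ b₁ b₂ b₃ b₄ b₅
    = ⟨a₀ - b₀, a₁ - b₁, a₂ - b₂, a₃ - b₃, a₄ - b₄, a₅ - b₅⟩ := rfl

theorem mk_mul_mk : mk a₀ a₁ a₂ a₃ a₄ a₅ * mk b₀ b₁ b₂ b₃ b₄ b₅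
    = ⟨a₀ * b₀, a₁ * b₀ + a₀ * b₁, a₂ * b₀ + a₀ * b₂, a₃ * b₀ + 2 * a₁ * b₁ + a₀ * b₃,
      a₄ * b₀ + a₁ * b₂ + a₂ * b₁ + a₀ * b₄, a₅ * b₀ + 2 * a₂ * b₂ + a₀ * b₅⟩ := rfl

end Jet2

def jet2 (g : ℝ × ℝ → ℝ) (x : ℝ × ℝ) : Jet2 :=
  ⟨g x, pdu g x, pdv g x, pdu (pdu g) x, pdv (pdu g) x, pdv (pdv g) x⟩

section Jets

variable {g h : ℝ × ℝ → ℝ} {x : ℝ × ℝ}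

theorem pdu_def (g : ℝ × ℝ → ℝ) : pdu g = fun p => fderiv ℝ g p (1, 0) := rfl

theorem pdv_def (g : ℝ × ℝ → ℝ) : pdv g = fun p => fderiv ℝ g p (0, 1) := rfl

theorem ContDiff.pdu (hg : ContDiff ℝ ∞ g) : ContDiff ℝ ∞ (pdu g) :=
  (hg.fderiv_right le_rfl).clm_apply contDiff_const

theorem ContDiff.pdv (hg : ContDiff ℝ ∞ g) : ContDiff ℝ ∞ (pdv g) :=
  (hg.fderiv_right le_rfl).clm_apply contDiff_const

theorem ContDiff.contDiffAt_two (hg : ContDiff ℝ ∞ g) : ContDiffAt ℝ 2 g x :=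
  (contDiff_infty.1 hg 2).contDiffAt

theorem pdu_pdv_comm (hg : ContDiff ℝ 2 g) : pdu (pdv g) = pdv (pdu g) := by
  funext p
  have hd : DifferentiableAt ℝ (fderiv ℝ g) p :=
    (hg.fderiv_right (m := 1) le_rfl).differentiable one_ne_zero p
  have key (v w : ℝ × ℝ) :
      fderiv ℝ (fun q => fderiv ℝ g q v) p w = fderiv ℝ (fderiv ℝ g) p w v := by
    rw [fderiv_clm_apply hd (differentiableAt_const v)]; simp
  simp only [pdu_def, pdv_def, key]
  exact hg.contDiffAt.isSymmSndFDerivAt (by simp [minSmoothness_of_isRCLikeNormedField]) _ _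

theorem jet2_pdv (hg : ContDiff ℝ 3 g) :
    jet2 (pdv g) x = ⟨pdv g x, pdv (pdu g) x, pdv (pdv g) x, pdv (pdu (pdu g)) x,
      pdv (pdv (pdu g)) x, pdv (pdv (pdv g)) x⟩ := by
  have hu : ContDiff ℝ 2 (pdu g) := (hg.fderiv_right (m := 2) le_rfl).clm_apply contDiff_const
  simp only [jet2, pdu_pdv_comm (hg.of_le (by norm_num)), pdu_pdv_comm hu]

theorem Filter.EventuallyEq.pdu (e : g =ᶠ[𝓝 x] h) : pdu g =ᶠ[𝓝 x] pdu h :=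
  e.fderiv.mono fun _ hp => DFunLike.congr_fun hp (1, 0)

theorem Filter.EventuallyEq.pdv (e : g =ᶠ[𝓝 x] h) : pdv g =ᶠ[𝓝 x] pdv h :=
  e.fderiv.mono fun _ hp => DFunLike.congr_fun hp (0, 1)

theorem Filter.EventuallyEq.jet2_eq (e : g =ᶠ[𝓝 x] h) : jet2 g x = jet2 h x :=
  Jet2.ext e.eq_of_nhds e.pdu.eq_of_nhds e.pdv.eq_of_nhds e.pdu.pdu.eq_of_nhds
    e.pdu.pdv.eq_of_nhds e.pdv.pdv.eq_of_nhds

theorem jet2_const (c : ℝ) : jet2 (fun _ => c) x = Jet2.const c := by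
  simp [jet2, Jet2.const_eq, pdu_def, pdv_def]

theorem jet2_add (hg : ContDiffAt ℝ 2 g x) (hh : ContDiffAt ℝ 2 h x) :
    jet2 (fun p => g p + h p) x = jet2 g x + jet2 h x := by
  have h1 (w : ℝ × ℝ) :
      fderiv ℝ (fun p => g p + h p) x w = fderiv ℝ g x w + fderiv ℝ h x w := by
    rw [fderiv_fun_add (hg.differentiableAt two_ne_zero) (hh.differentiableAt two_ne_zero),
      add_apply]
  simp only [jet2, Jet2.mk_add_mk, Jet2.mk.injEq, pdu_def, pdv_def, true_and]
  exact ⟨h1 _, h1 _, fderiv_fderiv_add_apply hg hh _ _, fderiv_fderiv_add_apply hg hh _ _,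
    fderiv_fderiv_add_apply hg hh _ _⟩

theorem jet2_mul (hg : ContDiffAt ℝ 2 g x) (hh : ContDiffAt ℝ 2 h x) :
    jet2 (fun p => g p * h p) x = jet2 g x * jet2 h x := by
  have h1 (w : ℝ × ℝ) :
      fderiv ℝ (fun p => g p * h p) x w = fderiv ℝ g x w * h x + g x * fderiv ℝ h x w := by
    rw [fderiv_fun_mul (hg.differentiableAt two_ne_zero) (hh.differentiableAt two_ne_zero)]
    simp only [add_apply, smul_apply, smul_eq_mul]
    ring
  simp only [jet2, Jet2.mk_mul_mk, Jet2.mk.injEq, pdu_def, pdv_def, true_and]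
  exact ⟨h1 _, h1 _, (fderiv_fderiv_mul_apply hg hh _ _).trans (by ring),
    fderiv_fderiv_mul_apply hg hh _ _, (fderiv_fderiv_mul_apply hg hh _ _).trans (by ring)⟩

theorem jet2_sub (hg : ContDiffAt ℝ 2 g x) (hh : ContDiffAt ℝ 2 h x) :
    jet2 (fun p => g p - h p) x = jet2 g x - jet2 h x := by
  have e : (fun p => g p - h p) = fun p => g p + (fun _ => (-1 : ℝ)) p * h p := by
    funext p; ring
  rw [e, jet2_add hg (contDiffAt_const.mul hh), jet2_mul contDiffAt_const hh, jet2_const]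
  simp only [jet2, Jet2.const_eq, Jet2.mk_mul_mk, Jet2.mk_add_mk, Jet2.mk_sub_mk]
  congr 1 <;> ring

theorem jet2_pow_two (hg : ContDiffAt ℝ 2 g x) :
    jet2 (fun p => g p ^ 2) x = jet2 g x * jet2 g x := by
  simpa only [sq] using jet2_mul hg hg

theorem jet2_sqrt {a b c : ℝ} (hg : ContDiffAt ℝ 2 g x) (h : jet2 g x = ⟨1, 0, 0, a, b, c⟩) :
    jet2 (fun p => √(g p)) x = ⟨1, 0, 0, a / 2, b / 2, c / 2⟩ := by
  have hg1 : g x = 1 := congrArg Jet2.val h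
  have hw : ContDiffAt ℝ 2 (fun p => √(g p)) x := hg.sqrt (by simp [hg1])
  have hpos : ∀ᶠ p in 𝓝 x, 0 < g p :=
    continuousAt_const.eventually_lt hg.continuousAt (by simp [hg1])
  have hsq : (fun p => √(g p) * √(g p)) =ᶠ[𝓝 x] g :=
    hpos.mono fun p hp => Real.mul_self_sqrt hp.le
  have key := ((jet2_mul hw hw).symm.trans hsq.jet2_eq).trans h
  have hw1 : (jet2 (fun p => √(g p)) x).val = 1 := by simp [jet2, hg1]
  generalize jet2 (fun p => √(g p)) x = w at key hw1
  obtain ⟨w₀, w₁, w₂, w₃, w₄, w₅⟩ := w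
  dsimp only at hw1
  subst hw1
  simp only [Jet2.mk_mul_mk, Jet2.mk.injEq] at key
  obtain ⟨-, hu, hv, huu, huv, hvv⟩ := key
  have hu0 : w₁ = 0 := by linarith
  have hv0 : w₂ = 0 := by linarith
  subst hu0 hv0
  simp only [Jet2.mk.injEq, true_and]
  refine ⟨?_, ?_, ?_⟩ <;> linarith

end Jets

section Monge

/- With `W = areaElt f`, the coefficients of the characteristic equation are
`EG - F² = gramDet f = W²`, `EN - 2FM + GL = meanCurvNum f / W` and
`LN - M² = hessDet f / W²`. -/

def gramDet (f : ℝ × ℝ → ℝ) (p : ℝ × ℝ) : ℝ := 1 + pdu f p ^ 2 + pdv f p ^ 2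

def areaElt (f : ℝ × ℝ → ℝ) (p : ℝ × ℝ) : ℝ := √(gramDet f p)

def meanCurvNum (f : ℝ × ℝ → ℝ) (p : ℝ × ℝ) : ℝ :=
  (1 + pdu f p ^ 2) * pdv (pdv f) p - 2 * pdu f p * pdv f p * pdv (pdu f) p
    + (1 + pdv f p ^ 2) * pdu (pdu f) p

def hessDet (f : ℝ × ℝ → ℝ) (p : ℝ × ℝ) : ℝ := pdu (pdu f) p * pdv (pdv f) p - pdv (pdu f) p ^ 2

variable {f κ : ℝ × ℝ → ℝ} {x : ℝ × ℝ}

theorem gramDet_pos (f : ℝ × ℝ → ℝ) (p : ℝ × ℝ) : 0 < gramDet f p := by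
  unfold gramDet; positivity

theorem IsPrincipalCurvature.cleared_eq {p : ℝ × ℝ} (h : IsPrincipalCurvature f κ p) :
    gramDet f p ^ 2 * κ p ^ 2 - areaElt f p * meanCurvNum f p * κ p + hessDet f p = 0 := by
  have hW2 : areaElt f p ^ 2 = gramDet f p := Real.sq_sqrt (gramDet_pos f p).le
  have hW : areaElt f p ≠ 0 := (Real.sqrt_pos.2 (gramDet_pos f p)).ne'
  have hq : √(1 + pdu f p ^ 2 + pdv f p ^ 2) = areaElt f p := rfl
  simp only [IsPrincipalCurvature, Ee, Ff, Gg, Ll, Mm, Nn, hq] at h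
  field_simp at h
  unfold meanCurvNum hessDet gramDet at *
  linear_combination h - (1 + pdu f p ^ 2 + pdv f p ^ 2) * κ p ^ 2 * hW2

theorem ContDiff.gramDet (hf : ContDiff ℝ ∞ f) : ContDiff ℝ ∞ (gramDet f) := by
  have := hf.pdu; have := hf.pdv
  unfold _root_.gramDet; fun_prop

theorem ContDiff.areaElt (hf : ContDiff ℝ ∞ f) : ContDiff ℝ ∞ (areaElt f) :=
  hf.gramDet.sqrt fun p => (gramDet_pos f p).ne'

theorem ContDiff.meanCurvNum (hf : ContDiff ℝ ∞ f) : ContDiff ℝ ∞ (meanCurvNum f) := by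
  have := hf.pdu; have := hf.pdv; have := hf.pdu.pdu; have := hf.pdu.pdv; have := hf.pdv.pdv
  unfold _root_.meanCurvNum; fun_prop

theorem ContDiff.hessDet (hf : ContDiff ℝ ∞ f) : ContDiff ℝ ∞ (hessDet f) := by
  have := hf.pdu.pdu; have := hf.pdu.pdv; have := hf.pdv.pdv
  unfold _root_.hessDet; fun_prop

theorem jet2_gramDet (hf : ContDiff ℝ ∞ f) :
    jet2 (gramDet f) x = Jet2.const 1 + jet2 (pdu f) x * jet2 (pdu f) x
      + jet2 (pdv f) x * jet2 (pdv f) x := by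
  have := hf.pdu.contDiffAt_two (x := x); have := hf.pdv.contDiffAt_two (x := x)
  unfold gramDet
  simp (disch := fun_prop) only [jet2_add, jet2_pow_two, jet2_const]

theorem jet2_meanCurvNum (hf : ContDiff ℝ ∞ f) :
    jet2 (meanCurvNum f) x
      = (Jet2.const 1 + jet2 (pdu f) x * jet2 (pdu f) x) * jet2 (pdv (pdv f)) x
        - Jet2.const 2 * jet2 (pdu f) x * jet2 (pdv f) x * jet2 (pdv (pdu f)) x
        + (Jet2.const 1 + jet2 (pdv f) x * jet2 (pdv f) x) * jet2 (pdu (pdu f)) x := by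
  have := hf.pdu.contDiffAt_two (x := x); have := hf.pdv.contDiffAt_two (x := x)
  have := hf.pdu.pdu.contDiffAt_two (x := x); have := hf.pdu.pdv.contDiffAt_two (x := x)
  have := hf.pdv.pdv.contDiffAt_two (x := x)
  unfold meanCurvNum
  simp (disch := fun_prop) only [jet2_add, jet2_sub, jet2_mul, jet2_pow_two, jet2_const]

theorem jet2_hessDet (hf : ContDiff ℝ ∞ f) :
    jet2 (hessDet f) x = jet2 (pdu (pdu f)) x * jet2 (pdv (pdv f)) x
      - jet2 (pdv (pdu f)) x * jet2 (pdv (pdu f)) x := by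
  have := hf.pdu.pdu.contDiffAt_two (x := x); have := hf.pdu.pdv.contDiffAt_two (x := x)
  have := hf.pdv.pdv.contDiffAt_two (x := x)
  unfold hessDet
  simp (disch := fun_prop) only [jet2_sub, jet2_mul, jet2_pow_two]

theorem jet2_cleared_characteristic (hf : ContDiff ℝ ∞ f) (hκ : ContDiffAt ℝ 2 κ x)
    (h : ∀ᶠ p in 𝓝 x, IsPrincipalCurvature f κ p) :
    jet2 (gramDet f) x * jet2 (gramDet f) x * (jet2 κ x * jet2 κ x)
      - jet2 (areaElt f) x * jet2 (meanCurvNum f) x * jet2 κ x + jet2 (hessDet f) x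
      = Jet2.const 0 := by
  have := hf.gramDet.contDiffAt_two (x := x); have := hf.areaElt.contDiffAt_two (x := x)
  have := hf.meanCurvNum.contDiffAt_two (x := x); have := hf.hessDet.contDiffAt_two (x := x)
  have e : (fun p => gramDet f p ^ 2 * κ p ^ 2 - areaElt f p * meanCurvNum f p * κ p
      + hessDet f p) =ᶠ[𝓝 x] fun _ => 0 := h.mono fun _ hp => hp.cleared_eq
  rw [← jet2_const (x := x), ← e.jet2_eq]
  simp (disch := fun_prop) only [jet2_add, jet2_sub, jet2_mul, jet2_pow_two]

end Monge


theorem stmt9_general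
    (f : ℝ × ℝ → ℝ) (hf : ContDiff ℝ (⊤ : ℕ∞) f)
    (k1 k2 a30 a21 a12 a03 a40 a31 a22 : ℝ) (hk : k1 ≠ k2)
    (h10 : pdu f 0 = 0) (h01 : pdv f 0 = 0)
    (h20 : pdu (pdu f) 0 = k1) (h11 : pdv (pdu f) 0 = 0) (h02 : pdv (pdv f) 0 = k2)
    (h30 : pdu (pdu (pdu f)) 0 = a30) (h21 : pdv (pdu (pdu f)) 0 = a21)
    (h12 : pdv (pdv (pdu f)) 0 = a12) (h03 : pdv (pdv (pdv f)) 0 = a03)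
    (h40 : pdu (pdu (pdu (pdu f))) 0 = a40)
    (h31 : pdv (pdu (pdu (pdu f))) 0 = a31)
    (h22 : pdv (pdv (pdu (pdu f))) 0 = a22)
    (κ : ℝ × ℝ → ℝ) (hκs : ContDiffAt ℝ (⊤ : ℕ∞) κ 0) (hκ0 : κ 0 = k1)
    (hκeig : ∀ᶠ p in nhds (0 : ℝ × ℝ), IsPrincipalCurvature f κ p) :
    pdu κ 0 = a30 ∧ pdv κ 0 = a21 ∧
    pdu (pdu κ) 0 = (2 * a21 ^ 2 + (a40 - 3 * k1 ^ 3) * (k1 - k2)) / (k1 - k2) ∧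
    pdv (pdu κ) 0 = (2 * a21 * a12 + a31 * (k1 - k2)) / (k1 - k2) ∧
    pdv (pdv κ) 0 = (2 * a12 ^ 2 + (a22 - k1 * k2 ^ 2) * (k1 - k2)) / (k1 - k2) := by
  have hfu : jet2 (pdu f) 0 = ⟨0, k1, 0, a30, a21, a12⟩ := Jet2.ext h10 h20 h11 h30 h21 h12
  have hfv : jet2 (pdv f) 0 = ⟨0, 0, k2, a21, a12, a03⟩ := by
    rw [jet2_pdv (contDiff_infty.1 hf 3), h01, h11, h02, h21, h12, h03]
  have hfuu : jet2 (pdu (pdu f)) 0 = ⟨k1, a30, a21, a40, a31, a22⟩ :=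
    Jet2.ext h20 h30 h21 h40 h31 h22
  -- `f_uvvv(0)` and `f_vvvv(0)` are not among the data: they cancel in the equations below.
  have hfuv : jet2 (pdv (pdu f)) 0 = ⟨0, a21, a12, a31, a22, pdv (pdv (pdv (pdu f))) 0⟩ := by
    rw [jet2_pdv (contDiff_infty.1 hf.pdu 3), h11, h21, h12, h31, h22]
  have hfvv : jet2 (pdv (pdv f)) 0
      = ⟨k2, a12, a03, a22, pdv (pdv (pdv (pdu f))) 0, pdv (pdv (pdv (pdv f))) 0⟩ := by
    rw [jet2_pdv (contDiff_infty.1 hf.pdv 3), pdu_pdv_comm (contDiff_infty.1 hf 2),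
      pdu_pdv_comm (contDiff_infty.1 hf.pdu 2), h02, h12, h03, h22]
  have hS : jet2 (gramDet f) 0 = ⟨1, 0, 0, 2 * k1 ^ 2, 0, 2 * k2 ^ 2⟩ := by
    simp only [jet2_gramDet hf, hfu, hfv, Jet2.const_eq, Jet2.mk_mul_mk, Jet2.mk_add_mk]
    congr 1 <;> ring
  have hW : jet2 (areaElt f) 0 = ⟨1, 0, 0, k1 ^ 2, 0, k2 ^ 2⟩ :=
    (jet2_sqrt hf.gramDet.contDiffAt_two hS).trans (by congr 1 <;> ring)
  have hK : jet2 κ 0 = ⟨k1, pdu κ 0, pdv κ 0, pdu (pdu κ) 0, pdv (pdu κ) 0, pdv (pdv κ) 0⟩ := by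
    rw [← hκ0]; rfl
  have hE := jet2_cleared_characteristic hf (hκs.of_le ENat.LEInfty.out) hκeig
  rw [hS, hW, jet2_meanCurvNum hf, jet2_hessDet hf, hfu, hfv, hfuu, hfuv, hfvv, hK] at hE
  simp only [Jet2.mk_add_mk, Jet2.mk_sub_mk, Jet2.mk_mul_mk, Jet2.const_eq, Jet2.mk.injEq] at hE
  obtain ⟨-, eu, ev, euu, euv, evv⟩ := hE
  have hk' : k1 - k2 ≠ 0 := sub_ne_zero.2 hk
  have hu : pdu κ 0 = a30 := mul_left_cancel₀ hk' (by linear_combination eu)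
  have hv : pdv κ 0 = a21 := mul_left_cancel₀ hk' (by linear_combination ev)
  simp only [hu, hv] at euu euv evv
  refine ⟨hu, hv, ?_, ?_, ?_⟩ <;> rw [eq_div_iff hk']
  · linear_combination euu
  · linear_combination euv
  · linear_combination evv

/-- The 2-jet of the principal curvature `κ₁` (with `κ₁(0) = k₁`, principal direction
`(1,0)`) of a Monge form surface with `k₁ ≠ k₂`, expressed through its partial
derivatives at the origin. -/
theorem stmt9
    (f : ℝ × ℝ → ℝ) (hf : ContDiff ℝ (⊤ : ℕ∞) f)
    (k1 k2 a30 a21 a12 a03 a40 a31 a22 : ℝ) (hk : k1 ≠ k2)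
    (h00 : f 0 = 0) (h10 : pdu f 0 = 0) (h01 : pdv f 0 = 0)
    (h20 : pdu (pdu f) 0 = k1) (h11 : pdv (pdu f) 0 = 0) (h02 : pdv (pdv f) 0 = k2)
    (h30 : pdu (pdu (pdu f)) 0 = a30) (h21 : pdv (pdu (pdu f)) 0 = a21)
    (h12 : pdv (pdv (pdu f)) 0 = a12) (h03 : pdv (pdv (pdv f)) 0 = a03)
    (h40 : pdu (pdu (pdu (pdu f))) 0 = a40)
    (h31 : pdv (pdu (pdu (pdu f))) 0 = a31)
    (h22 : pdv (pdv (pdu (pdu f))) 0 = a22)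
    (κ : ℝ × ℝ → ℝ) (hκs : ContDiffAt ℝ (⊤ : ℕ∞) κ 0) (hκ0 : κ 0 = k1)
    (hκeig : ∀ᶠ p in nhds (0 : ℝ × ℝ), IsPrincipalCurvature f κ p) :
    pdu κ 0 = a30 ∧ pdv κ 0 = a21 ∧
    pdu (pdu κ) 0 = (2 * a21 ^ 2 + (a40 - 3 * k1 ^ 3) * (k1 - k2)) / (k1 - k2) ∧
    pdv (pdu κ) 0 = (2 * a21 * a12 + a31 * (k1 - k2)) / (k1 - k2) ∧
    pdv (pdv κ) 0 = (2 * a12 ^ 2 + (a22 - k1 * k2 ^ 2) * (k1 - k2)) / (k1 - k2) :=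
  stmt9_general f hf k1 k2 a30 a21 a12 a03 a40 a31 a22 hk h10 h01 h20 h11 h02 h30 h21 h12 h03 h40
    h31 h22 κ hκs hκ0 hκeig
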